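/- Let α ∈ (0,1), β = 1/8, u_p = 0.5(1-(1-α)^{1/p}), and c(p) = Φ^{-1}(1 - u_p). If p = p(n) → ∞ with p(n) = O(n^{2-δ}) for some δ > 0, then 2p(1 - Φ(c(p)·√(1 - u_p^β))) → -ln(1-α) as n → ∞. -/

import Mathlib

open MeasureTheory ProbabilityTheory Filter Real

/-- Standard normal CDF. -/
noncomputable def Phi : ℝ → ℝ := fun x => ProbabilityTheory.cdf (gaussianReal 0 1) x

/-- Standard normal quantile function. -/
noncomputable def PhiInv : ℝ → ℝ := fun q => sInf {x | q ≤ Phi x}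

/-!
Write `u = u_p`, `c = Φ⁻¹(1 - u)` and `ε = u^β`, so that `1 - Φ(c) = u`. The factor `2pu` tends to
`-log(1-α)` because `t ↦ (1-α)^t` has derivative `log(1-α)` at `0`. It remains to see that
`(1 - Φ(c√(1-ε)))/u → 1`. By the mean value theorem and the Mills-ratio bound
`cφ(c) ≤ (1+c²)(1-Φ(c))`, the excess `Φ(c) - Φ(c√(1-ε))` is at most `u(1+c²)ε e^{c²ε/2}`;
the other Mills-ratio bound `1 - Φ(c) ≤ φ(c)/c` gives `c² ≤ -2 log u`, so `c²ε → 0`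
since `u^β log u → 0`.
-/

open Set Topology

noncomputable def phi (x : ℝ) : ℝ := (√(2 * π))⁻¹ * exp (-x ^ 2 / 2)

lemma phi_eq_gaussianPDFReal : phi = gaussianPDFReal 0 1 := by
  ext x
  simp [phi, gaussianPDFReal]

lemma phi_pos (x : ℝ) : 0 < phi x := by
  rw [phi_eq_gaussianPDFReal]
  exact gaussianPDFReal_pos 0 1 x one_ne_zero

lemma integrable_phi : Integrable phi := by
  rw [phi_eq_gaussianPDFReal]
  exact integrable_gaussianPDFReal 0 1

lemma continuous_phi : Continuous phi := by
  unfold phi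
  fun_prop

lemma hasDerivAt_phi (x : ℝ) : HasDerivAt phi (-x * phi x) x := by
  have h : HasDerivAt (fun t : ℝ => -t ^ 2 / 2) (-x) x :=
    ((hasDerivAt_pow 2 x).neg.div_const 2).congr_deriv (by norm_num; ring)
  exact (h.exp.const_mul (√(2 * π))⁻¹).congr_deriv (by rw [phi]; ring)

lemma tendsto_phi_atTop : Tendsto phi atTop (𝓝 0) := by
  unfold phi
  have h : Tendsto (fun x : ℝ => -x ^ 2 / 2) atTop atBot :=
    (tendsto_neg_atBot_iff.2 (tendsto_pow_atTop two_ne_zero)).atBot_div_const two_pos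
  simpa only [mul_zero, Function.comp_def] using (tendsto_exp_atBot.comp h).const_mul (√(2 * π))⁻¹

lemma phi_antitoneOn : AntitoneOn phi (Ici 0) := fun a ha b _ hab => by
  unfold phi
  gcongr

lemma phi_mul_sqrt_one_sub (c : ℝ) {ε : ℝ} (hε : ε ≤ 1) :
    phi (c * √(1 - ε)) = phi c * exp (c ^ 2 * ε / 2) := by
  rw [phi, phi, mul_assoc, ← exp_add, mul_pow, sq_sqrt (by linarith)]
  ring_nf

lemma Phi_eq_integral (x : ℝ) : Phi x = ∫ t in Iic x, phi t := by
  rw [Phi, cdf_eq_real, measureReal_def, gaussianReal_apply_eq_integral 0 one_ne_zero,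
    ENNReal.toReal_ofReal, phi_eq_gaussianPDFReal]
  exact setIntegral_nonneg measurableSet_Iic fun t _ => gaussianPDFReal_nonneg 0 1 t

lemma Phi_sub_Phi_eq_intervalIntegral (a b : ℝ) : Phi b - Phi a = ∫ t in a..b, phi t := by
  rw [Phi_eq_integral, Phi_eq_integral]
  exact intervalIntegral.integral_Iic_sub_Iic integrable_phi.integrableOn
    integrable_phi.integrableOn

lemma hasDerivAt_Phi (x : ℝ) : HasDerivAt Phi (phi x) x := by
  have h : Phi = fun x => Phi 0 + ∫ t in (0 : ℝ)..x, phi t := by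
    ext x; rw [← Phi_sub_Phi_eq_intervalIntegral]; ring
  rw [h]
  exact (intervalIntegral.integral_hasDerivAt_right integrable_phi.intervalIntegrable
    (continuous_phi.stronglyMeasurableAtFilter _ _) continuous_phi.continuousAt).const_add _

lemma continuous_Phi : Continuous Phi :=
  continuous_iff_continuousAt.2 fun x => (hasDerivAt_Phi x).continuousAt

lemma strictMono_Phi : StrictMono Phi :=
  strictMono_of_deriv_pos fun x => (hasDerivAt_Phi x).deriv ▸ phi_pos x

lemma Phi_lt_one (x : ℝ) : Phi x < 1 :=
  (strictMono_Phi (lt_add_one x)).trans_le (cdf_le_one _ _)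

lemma PhiInv_Phi (x : ℝ) : PhiInv (Phi x) = x := by
  have h : {y | Phi x ≤ Phi y} = Ici x := by
    ext y; exact strictMono_Phi.le_iff_le
  rw [PhiInv, h, csInf_Ici]

lemma Phi_PhiInv {q : ℝ} (hq0 : 0 < q) (hq1 : q < 1) : Phi (PhiInv q) = q := by
  obtain ⟨a, ha⟩ := ((tendsto_cdf_atBot _).eventually (eventually_lt_nhds hq0)).exists
  obtain ⟨b, hb⟩ := ((tendsto_cdf_atTop _).eventually (eventually_gt_nhds hq1)).exists
  obtain ⟨x, rfl⟩ := intermediate_value_univ a b continuous_Phi ⟨le_of_lt ha, le_of_lt hb⟩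
  rw [PhiInv_Phi]

lemma nonneg_of_hasDerivAt_nonpos_of_tendsto_atTop {f f' : ℝ → ℝ} {x : ℝ}
    (hf : ∀ t ∈ Ici x, HasDerivAt f (f' t) t) (hf' : ∀ t ∈ Ioi x, f' t ≤ 0)
    (hlim : Tendsto f atTop (𝓝 0)) : 0 ≤ f x := by
  have hanti : AntitoneOn f (Ici x) := by
    refine antitoneOn_of_deriv_nonpos (convex_Ici x)
      (fun t ht => (hf t ht).continuousAt.continuousWithinAt) ?_ ?_ <;> rw [interior_Ici]
    · exact fun t ht => (hf t (Ioi_subset_Ici_self ht)).differentiableAt.differentiableWithinAt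
    · exact fun t ht => (hf t (Ioi_subset_Ici_self ht)).deriv ▸ hf' t ht
  exact le_of_tendsto hlim ((eventually_ge_atTop x).mono fun t ht => hanti self_mem_Ici ht ht)

lemma tendsto_one_sub_Phi_atTop : Tendsto (fun x => 1 - Phi x) atTop (𝓝 0) := by
  rw [← sub_self (1 : ℝ)]
  exact (tendsto_cdf_atTop (gaussianReal 0 1)).const_sub 1

lemma one_sub_Phi_le_phi_div {x : ℝ} (hx : 0 < x) : 1 - Phi x ≤ phi x / x := by
  have hderiv : ∀ t ∈ Ici x, HasDerivAt (fun t => phi t / t - (1 - Phi t)) (-phi t / t ^ 2) t :=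
    fun t ht => by
      have ht0 : t ≠ 0 := (hx.trans_le ht).ne'
      refine (((hasDerivAt_phi t).div (hasDerivAt_id t) ht0).sub
        ((hasDerivAt_Phi t).const_sub 1)).congr_deriv ?_
      simp only [id_eq]
      field_simp
      ring
  have hlim : Tendsto (fun t => phi t / t - (1 - Phi t)) atTop (𝓝 0) := by
    simpa [div_eq_mul_inv] using
      (tendsto_phi_atTop.mul tendsto_inv_atTop_zero).sub tendsto_one_sub_Phi_atTop
  have := nonneg_of_hasDerivAt_nonpos_of_tendsto_atTop hderiv
    (fun t _ => div_nonpos_of_nonpos_of_nonneg (neg_nonpos.2 (phi_pos t).le) (sq_nonneg t)) hlim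
  linarith

lemma mul_phi_le_one_add_sq_mul_one_sub_Phi (x : ℝ) : x * phi x ≤ (1 + x ^ 2) * (1 - Phi x) := by
  have hderiv : ∀ t ∈ Ici x, HasDerivAt (fun t => (1 - Phi t) - t * phi t / (1 + t ^ 2))
      (-2 * phi t / (1 + t ^ 2) ^ 2) t := fun t _ => by
    have hden : HasDerivAt (fun t : ℝ => 1 + t ^ 2) (2 * t) t := by
      simpa using (hasDerivAt_pow 2 t).const_add 1
    refine (((hasDerivAt_Phi t).const_sub 1).sub
      (((hasDerivAt_id t).mul (hasDerivAt_phi t)).div hden (by positivity))).congr_deriv ?_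
    simp only [id_eq, Pi.mul_apply]
    field_simp
    ring
  have hlim : Tendsto (fun t => (1 - Phi t) - t * phi t / (1 + t ^ 2)) atTop (𝓝 0) := by
    have hsq : Tendsto (fun t => t * phi t / (1 + t ^ 2)) atTop (𝓝 0) := by
      refine tendsto_of_tendsto_of_tendsto_of_le_of_le' tendsto_const_nhds tendsto_phi_atTop ?_ ?_
      all_goals filter_upwards [eventually_ge_atTop 0] with t ht
      · have := phi_pos t; positivity
      · rw [div_le_iff₀ (by positivity)]
        nlinarith [phi_pos t, sq_nonneg (t - 1)]
    simpa using tendsto_one_sub_Phi_atTop.sub hsq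
  have := nonneg_of_hasDerivAt_nonpos_of_tendsto_atTop hderiv
    (fun t _ => div_nonpos_of_nonpos_of_nonneg (by linarith [phi_pos t]) (by positivity)) hlim
  rw [sub_nonneg, div_le_iff₀ (by positivity)] at this
  linarith

lemma Phi_sub_Phi_mul_le {c s : ℝ} (hc : 0 ≤ c) (hs0 : 0 ≤ s) (hs1 : s ≤ 1) :
    Phi c - Phi (c * s) ≤ phi (c * s) * (c - c * s) := by
  have hcs : c * s ≤ c := mul_le_of_le_one_right hc hs1
  refine (convex_Icc (c * s) c).image_sub_le_mul_sub_of_deriv_le continuous_Phi.continuousOn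
    (fun y _ => (hasDerivAt_Phi y).differentiableAt.differentiableWithinAt)
    (fun y hy => ?_) _ (left_mem_Icc.2 hcs) _ (right_mem_Icc.2 hcs) hcs
  rw [(hasDerivAt_Phi y).deriv]
  have hy' := interior_subset hy
  exact phi_antitoneOn (mul_nonneg hc hs0) ((mul_nonneg hc hs0).trans hy'.1) hy'.1

lemma one_sub_sqrt_one_sub_le {ε : ℝ} (hε0 : 0 ≤ ε) (hε1 : ε ≤ 1) : 1 - √(1 - ε) ≤ ε := by
  have : 1 - ε ≤ √(1 - ε) := Real.le_sqrt_of_sq_le (by nlinarith)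
  linarith

lemma Phi_sub_Phi_mul_sqrt_le {c ε : ℝ} (hc : 0 ≤ c) (hε0 : 0 ≤ ε) (hε1 : ε ≤ 1) :
    Phi c - Phi (c * √(1 - ε)) ≤ (1 - Phi c) * ((1 + c ^ 2) * ε * exp (c ^ 2 * ε / 2)) := by
  have hs1 : √(1 - ε) ≤ 1 := Real.sqrt_le_one.2 (by linarith)
  calc Phi c - Phi (c * √(1 - ε)) ≤ phi (c * √(1 - ε)) * (c - c * √(1 - ε)) :=
        Phi_sub_Phi_mul_le hc (Real.sqrt_nonneg _) hs1
    _ = c * phi c * (1 - √(1 - ε)) * exp (c ^ 2 * ε / 2) := by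
        rw [phi_mul_sqrt_one_sub c hε1]; ring
    _ ≤ (1 + c ^ 2) * (1 - Phi c) * ε * exp (c ^ 2 * ε / 2) := by
        refine mul_le_mul_of_nonneg_right (mul_le_mul (mul_phi_le_one_add_sq_mul_one_sub_Phi c)
          (one_sub_sqrt_one_sub_le hε0 hε1) (by linarith) ?_) (exp_nonneg _)
        exact mul_nonneg (by positivity) (sub_nonneg.2 (Phi_lt_one c).le)
    _ = (1 - Phi c) * ((1 + c ^ 2) * ε * exp (c ^ 2 * ε / 2)) := by ring

lemma sq_le_neg_two_mul_log_one_sub_Phi {c : ℝ} (hc : 1 ≤ c) : c ^ 2 ≤ -2 * log (1 - Phi c) := by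
  have hsqrt : 1 ≤ √(2 * π) := Real.one_le_sqrt.2 (by linarith [pi_gt_three])
  have htail : 1 - Phi c ≤ exp (-c ^ 2 / 2) :=
    calc 1 - Phi c ≤ phi c / c := one_sub_Phi_le_phi_div (by linarith)
      _ ≤ phi c := div_le_self (phi_pos c).le hc
      _ ≤ exp (-c ^ 2 / 2) := mul_le_of_le_one_left (exp_nonneg _) (inv_le_one_of_one_le₀ hsqrt)
  have := log_le_log (sub_pos.2 (Phi_lt_one c)) htail
  rw [log_exp] at this
  linarith

section
variable {ι : Type*} {l : Filter ι} {u : ι → ℝ}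

lemma eventually_Phi_PhiInv_one_sub (hu : Tendsto u l (𝓝[>] 0)) :
    ∀ᶠ i in l, Phi (PhiInv (1 - u i)) = 1 - u i := by
  filter_upwards [hu (Ioo_mem_nhdsGT one_pos)] with i hi
  exact Phi_PhiInv (by linarith [hi.2]) (by linarith [hi.1])

lemma eventually_one_le_PhiInv_one_sub (hu : Tendsto u l (𝓝[>] 0)) :
    ∀ᶠ i in l, 1 ≤ PhiInv (1 - u i) := by
  filter_upwards [hu (Ioo_mem_nhdsGT (sub_pos.2 (Phi_lt_one 1))),
    eventually_Phi_PhiInv_one_sub hu] with i hi hΦ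
  exact strictMono_Phi.le_iff_le.1 (by rw [hΦ]; linarith [hi.2])

lemma tendsto_PhiInv_one_sub_sq_mul_rpow {β : ℝ} (hβ : 0 < β) (hu : Tendsto u l (𝓝[>] 0)) :
    Tendsto (fun i => PhiInv (1 - u i) ^ 2 * u i ^ β) l (𝓝 0) := by
  have hlog : Tendsto (fun i => -2 * (log (u i) * u i ^ β)) l (𝓝 0) := by
    simpa using ((tendsto_log_mul_rpow_nhdsGT_zero hβ).comp hu).const_mul (-2)
  refine tendsto_of_tendsto_of_tendsto_of_le_of_le' tendsto_const_nhds hlog ?_ ?_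
  all_goals filter_upwards [hu self_mem_nhdsWithin, eventually_one_le_PhiInv_one_sub hu,
    eventually_Phi_PhiInv_one_sub hu] with i hpos hc hΦ
  · exact mul_nonneg (sq_nonneg _) (rpow_nonneg hpos.le _)
  · have hsq := sq_le_neg_two_mul_log_one_sub_Phi hc
    rw [hΦ, sub_sub_cancel] at hsq
    calc PhiInv (1 - u i) ^ 2 * u i ^ β ≤ -2 * log (u i) * u i ^ β :=
          mul_le_mul_of_nonneg_right hsq (rpow_nonneg hpos.le _)
      _ = -2 * (log (u i) * u i ^ β) := by ring

theorem tendsto_one_sub_Phi_PhiInv_one_sub_mul_sqrt_div {β : ℝ} (hβ : 0 < β)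
    (hu : Tendsto u l (𝓝[>] 0)) :
    Tendsto (fun i => (1 - Phi (PhiInv (1 - u i) * √(1 - u i ^ β))) / u i) l (𝓝 1) := by
  have hpos : ∀ᶠ i in l, 0 < u i := hu self_mem_nhdsWithin
  have hε : Tendsto (fun i => u i ^ β) l (𝓝 0) := by
    simpa [zero_rpow hβ.ne', Function.comp_def] using
      (continuousAt_rpow_const 0 β (Or.inr hβ.le)).tendsto.comp
        (tendsto_nhds_of_tendsto_nhdsWithin hu)
  have hcε := tendsto_PhiInv_one_sub_sq_mul_rpow hβ hu
  have herr : Tendsto (fun i => (1 + PhiInv (1 - u i) ^ 2) * u i ^ β *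
      exp (PhiInv (1 - u i) ^ 2 * u i ^ β / 2)) l (𝓝 0) := by
    have h1 : Tendsto (fun i => (1 + PhiInv (1 - u i) ^ 2) * u i ^ β) l (𝓝 0) := by
      simpa [add_mul] using hε.add hcε
    have h2 : Tendsto (fun i => exp (PhiInv (1 - u i) ^ 2 * u i ^ β / 2)) l (𝓝 1) := by
      simpa [Function.comp_def] using
        (continuous_exp.tendsto 0).comp (zero_div (2 : ℝ) ▸ hcε.div_const 2)
    simpa using h1.mul h2
  refine tendsto_of_tendsto_of_tendsto_of_le_of_le' tendsto_const_nhds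
    (by simpa using herr.const_add 1) ?_ ?_
  all_goals filter_upwards [hpos, hε.eventually (eventually_le_nhds one_pos),
    eventually_one_le_PhiInv_one_sub hu, eventually_Phi_PhiInv_one_sub hu] with i hpos hε1 hc hΦ
  · have hs : √(1 - u i ^ β) ≤ 1 := Real.sqrt_le_one.2 (by linarith [rpow_nonneg hpos.le β])
    have := strictMono_Phi.monotone
      (mul_le_of_le_one_right (by linarith : 0 ≤ PhiInv (1 - u i)) hs)
    rw [hΦ] at this
    rw [le_div_iff₀ hpos]
    linarith
  · have := Phi_sub_Phi_mul_sqrt_le (by linarith : 0 ≤ PhiInv (1 - u i))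
      (rpow_nonneg hpos.le β) hε1
    rw [hΦ] at this
    rw [div_le_iff₀ hpos]
    linarith

end

lemma tendsto_mul_one_sub_rpow_one_div {a : ℝ} (ha : 0 < a) :
    Tendsto (fun x : ℝ => x * (1 - a ^ (1 / x))) atTop (𝓝 (-log a)) := by
  have hd : HasDerivAt (fun t : ℝ => a ^ t) (log a) 0 := by
    simpa using (hasStrictDerivAt_const_rpow ha 0).hasDerivAt
  refine (hd.tendsto_slope_zero_right.comp tendsto_inv_atTop_nhdsGT_zero).neg.congr' ?_
  filter_upwards [eventually_ne_atTop 0] with x hx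
  simp only [Function.comp_apply, zero_add, rpow_zero, smul_eq_mul, inv_inv, one_div]
  ring

theorem stmt4_general (α : ℝ) (hα0 : 0 < α) (hα1 : α < 1)
    (p : ℕ → ℕ) (hptop : Tendsto p atTop atTop) :
    Tendsto (fun n : ℕ =>
        2 * (p n : ℝ) *
          (1 - Phi (PhiInv (1 - 0.5 * (1 - (1 - α) ^ ((1 : ℝ) / (p n : ℝ))))
            * Real.sqrt (1 - (0.5 * (1 - (1 - α) ^ ((1 : ℝ) / (p n : ℝ)))) ^ (8⁻¹ : ℝ)))))
      atTop (nhds (-Real.log (1 - α))) := by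
  set u : ℕ → ℝ := fun n => 0.5 * (1 - (1 - α) ^ ((1 : ℝ) / (p n : ℝ)))
  have hp : Tendsto (fun n => (p n : ℝ)) atTop atTop := tendsto_natCast_atTop_atTop.comp hptop
  have hlim : Tendsto (fun n => 2 * (p n : ℝ) * u n) atTop (𝓝 (-log (1 - α))) := by
    refine ((tendsto_mul_one_sub_rpow_one_div (sub_pos.2 hα1)).comp hp).congr fun n => ?_
    simp only [Function.comp, u]
    ring
  have hpos : ∀ᶠ n in atTop, 0 < u n := by
    filter_upwards [hp.eventually_gt_atTop 0] with n hn
    have := rpow_lt_one (sub_pos.2 hα1).le (by linarith) (one_div_pos.2 hn)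
    simp only [u]
    linarith
  have hu : Tendsto u atTop (𝓝[>] 0) := by
    refine tendsto_nhdsWithin_of_tendsto_nhds_of_eventually_within _ ?_ hpos
    refine (hlim.div_atTop (hp.const_mul_atTop two_pos)).congr' ?_
    filter_upwards [hp.eventually_gt_atTop 0] with n hn
    field_simp
  have hratio := tendsto_one_sub_Phi_PhiInv_one_sub_mul_sqrt_div (β := 8⁻¹) (by norm_num) hu
  refine (mul_one (-log (1 - α)) ▸ hlim.mul hratio).congr' ?_
  filter_upwards [hpos] with n hn
  rw [mul_assoc _ (u n), mul_div_cancel₀ _ hn.ne']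

theorem stmt4 (α δ C : ℝ) (hα0 : 0 < α) (hα1 : α < 1) (hδ : 0 < δ) (hC : 0 < C)
    (p : ℕ → ℕ) (hptop : Tendsto p atTop atTop)
    (hpC : ∀ n : ℕ, (p n : ℝ) ≤ C * (n : ℝ) ^ (2 - δ)) :
    Tendsto (fun n : ℕ =>
        2 * (p n : ℝ) *
          (1 - Phi (PhiInv (1 - 0.5 * (1 - (1 - α) ^ ((1 : ℝ) / (p n : ℝ))))
            * Real.sqrt (1 - (0.5 * (1 - (1 - α) ^ ((1 : ℝ) / (p n : ℝ)))) ^ (8⁻¹ : ℝ)))))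
      atTop (nhds (-Real.log (1 - α))) :=
  stmt4_general α hα0 hα1 p hptop
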